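/- Let g be a symmetric 4×4 real matrix whose associated quadratic form x ↦ xᵀgx is equivalent over ℝ to the Minkowski form −x₀² + x₁² + x₂² + x₃² (i.e. g has Lorentzian signature (−1,1,1,1)). Let ζ ∈ ℝ⁴ and W ∈ ℝ⁴ with Ω² = 1 + ζᵀW > 0. Then the quadratic form associated to T(ζ, W, g) is also equivalent over ℝ to the Minkowski form −x₀² + x₁² + x₂² + x₃². -/

import Mathlib

open Matrix

/-- The transformation `T(ζ, W, g) = Ω²·g − (gζ)Wᵀ − W(gζ)ᵀ − (λ/Ω²)·W Wᵀ`
with `Ω² = 1 + ζᵀW` and `λ = −ζᵀgζ`. -/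
noncomputable def ehlersT {n : ℕ} (ζ W : Fin n → ℝ) (g : Matrix (Fin n) (Fin n) ℝ) :
    Matrix (Fin n) (Fin n) ℝ :=
  (1 + ζ ⬝ᵥ W) • g - vecMulVec (g *ᵥ ζ) W - vecMulVec W (g *ᵥ ζ)
    - ((-(ζ ⬝ᵥ g *ᵥ ζ)) / (1 + ζ ⬝ᵥ W)) • vecMulVec W W

/-- The Minkowski matrix `diag(−1, 1, 1, 1)`. -/
def minkowskiMatrix : Matrix (Fin 4) (Fin 4) ℝ := Matrix.diagonal ![-1, 1, 1, 1]

/-- A symmetric `4 × 4` real matrix has Lorentzian signature `(−1,1,1,1)` if its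
quadratic form is carried to the Minkowski form `−x₀² + x₁² + x₂² + x₃²` by an
invertible real linear change of variables, i.e. if `g` is congruent to
`diag(−1,1,1,1)` via an invertible matrix (Sylvester's law of inertia). -/
def IsLorentzian (g : Matrix (Fin 4) (Fin 4) ℝ) : Prop :=
  ∃ P : Matrix (Fin 4) (Fin 4) ℝ, IsUnit P.det ∧ Pᵀ * g * P = minkowskiMatrix

/-!
With `Ω² = 1 + ζᵀW` and `C = 1 − Ω⁻² ζWᵀ`, a direct expansion using the symmetry of `g` gives
`T(ζ, W, g) = Ω² · Cᵀ g C`. By the matrix determinant lemma `det C = Ω⁻² ≠ 0`, so `T` is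
congruent to the positive multiple `Ω² g` of `g`, and congruence and positive scaling both
preserve the signature.
-/

namespace Matrix

variable {K n : Type*} [Field K] [Fintype n] [DecidableEq n]

theorem det_one_add_vecMulVec (u v : n → K) : (1 + vecMulVec u v).det = 1 + v ⬝ᵥ u := by
  rw [vecMulVec_eq Unit, det_one_add_replicateCol_mul_replicateRow]

theorem det_one_sub_inv_smul_vecMulVec (ζ W : n → K) (hΩ : 1 + ζ ⬝ᵥ W ≠ 0) :
    (1 - (1 + ζ ⬝ᵥ W)⁻¹ • vecMulVec ζ W).det = (1 + ζ ⬝ᵥ W)⁻¹ := by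
  rw [sub_eq_add_neg, ← neg_smul, ← smul_vecMulVec, det_one_add_vecMulVec, dotProduct_smul,
    dotProduct_comm W ζ, smul_eq_mul]
  field_simp
  ring

end Matrix

theorem ehlersT_eq_smul_transpose_mul_mul {n : ℕ} {g : Matrix (Fin n) (Fin n) ℝ} (hg : g.IsSymm)
    {ζ W : Fin n → ℝ} (hΩ : 1 + ζ ⬝ᵥ W ≠ 0) :
    ehlersT ζ W g = (1 + ζ ⬝ᵥ W) •
      ((1 - (1 + ζ ⬝ᵥ W)⁻¹ • vecMulVec ζ W)ᵀ * g * (1 - (1 + ζ ⬝ᵥ W)⁻¹ • vecMulVec ζ W)) := by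
  have hgζ : ζ ᵥ* g = g *ᵥ ζ := by rw [← vecMul_transpose, hg.eq]
  simp only [ehlersT, transpose_sub, transpose_one, transpose_smul, transpose_vecMulVec,
    Matrix.sub_mul, Matrix.mul_sub, Matrix.one_mul, Matrix.mul_one, Matrix.smul_mul, Matrix.mul_smul,
    mul_vecMulVec, vecMulVec_mul, sub_vecMulVec, hgζ, dotProduct_comm (g *ᵥ ζ) ζ,
    sub_mulVec, smul_mulVec, vecMulVec_mulVec, op_smul_eq_smul, smul_vecMulVec, smul_smul]
  match_scalars <;> field_simp

theorem IsLorentzian.transpose_mul_mul {g Q : Matrix (Fin 4) (Fin 4) ℝ} (hg : IsLorentzian g)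
    (hQ : IsUnit Q.det) : IsLorentzian (Qᵀ * g * Q) := by
  obtain ⟨P, hP, hgP⟩ := hg
  refine ⟨Q⁻¹ * P, by rw [det_mul]; exact (isUnit_nonsing_inv_det Q hQ).mul hP, ?_⟩
  have hQQ : Q * Q⁻¹ = 1 := mul_nonsing_inv Q hQ
  calc (Q⁻¹ * P)ᵀ * (Qᵀ * g * Q) * (Q⁻¹ * P)
      = Pᵀ * (Q * Q⁻¹)ᵀ * g * (Q * Q⁻¹) * P := by
        simp only [transpose_mul, Matrix.mul_assoc]
    _ = minkowskiMatrix := by rw [hQQ, transpose_one, Matrix.mul_one, Matrix.mul_one, hgP]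

theorem IsLorentzian.smul {g : Matrix (Fin 4) (Fin 4) ℝ} (hg : IsLorentzian g) {c : ℝ}
    (hc : 0 < c) : IsLorentzian (c • g) := by
  obtain ⟨P, hP, hgP⟩ := hg
  have hs : √c ≠ 0 := (Real.sqrt_pos.2 hc).ne'
  refine ⟨(√c)⁻¹ • P, by rw [det_smul]; exact ((inv_ne_zero hs).isUnit.pow _).mul hP, ?_⟩
  have hsc : (√c)⁻¹ * c * (√c)⁻¹ = 1 := by
    field_simp
    exact (Real.sq_sqrt hc.le).symm
  calc ((√c)⁻¹ • P)ᵀ * (c • g) * ((√c)⁻¹ • P)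
      = ((√c)⁻¹ * c * (√c)⁻¹) • (Pᵀ * g * P) := by
        simp only [transpose_smul, Matrix.smul_mul, Matrix.mul_smul, smul_smul, mul_assoc]
    _ = minkowskiMatrix := by rw [hsc, one_smul, hgP]

/-- **The transformation `T` preserves Lorentzian signature:** if `g` is symmetric of
Lorentzian signature `(−1,1,1,1)` and `Ω² = 1 + ζᵀW > 0`, then `T(ζ, W, g)` also has
Lorentzian signature `(−1,1,1,1)`. -/
theorem ehlersT_isLorentzian (g : Matrix (Fin 4) (Fin 4) ℝ) (hg : g.IsSymm)
    (hLor : IsLorentzian g) (ζ W : Fin 4 → ℝ) (hΩ : 0 < 1 + ζ ⬝ᵥ W) :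
    IsLorentzian (ehlersT ζ W g) := by
  rw [ehlersT_eq_smul_transpose_mul_mul hg hΩ.ne']
  refine (hLor.transpose_mul_mul ?_).smul hΩ
  rw [det_one_sub_inv_smul_vecMulVec ζ W hΩ.ne']
  exact (inv_pos.2 hΩ).ne'.isUnit
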